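/- Let R = F_2[X,Y,Z]/(X^2,Y^2,Z^2) with maximal ideal m = (x,y,z). For every element a in the degree-2 plus degree-3 graded part and every nonzero b of degree 1, the annihilator of a+b is not contained in m^2. -/

import Mathlib

/-- Length of a module: the longest chain in its submodule lattice. -/
noncomputable def len (R M : Type*) [Ring R] [AddCommGroup M] [Module R M] : ℕ∞ :=
  WithBot.unbotD 0 (Order.krullDim (Submodule R M))

/-- Minimal number of generators of a submodule, as an extended natural number. -/
noncomputable def mu {R M : Type*} [Ring R] [AddCommGroup M] [Module R M]
    (N : Submodule R M) : ℕ∞ :=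
  sInf {n : ℕ∞ | ∃ s : Finset M, (s.card : ℕ∞) = n ∧ Submodule.span R (s : Set M) = N}

open MvPolynomial in
/-- The defining ideal `(X², Y², Z²)` of `F₂[X,Y,Z]`. -/
noncomputable def relIdeal : Ideal (MvPolynomial (Fin 3) (ZMod 2)) :=
  Ideal.span {X 0 ^ 2, X 1 ^ 2, X 2 ^ 2}

/-- The ring `R = F₂[X,Y,Z]/(X²,Y²,Z²)`. -/
abbrev Rcir : Type := MvPolynomial (Fin 3) (ZMod 2) ⧸ relIdeal

/-- The degree-`i` graded part of `R`, the image of the homogeneous polynomials of degree `i`. -/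
noncomputable def gradedPart (i : ℕ) : Submodule (ZMod 2) Rcir :=
  Submodule.map (Ideal.Quotient.mkₐ (ZMod 2) relIdeal).toLinearMap
    (MvPolynomial.homogeneousSubmodule (Fin 3) (ZMod 2) i)

/-- The maximal ideal `m = (x, y, z)` of `R`. -/
noncomputable def mIdeal : Ideal Rcir :=
  Ideal.span {Ideal.Quotient.mk relIdeal (MvPolynomial.X 0),
    Ideal.Quotient.mk relIdeal (MvPolynomial.X 1),
    Ideal.Quotient.mk relIdeal (MvPolynomial.X 2)}


/-!
Write `a = a₂ + a₃` and `b = ∑ cᵢ xᵢ` with some `cᵢ = 1`. Since `R₄ = 0` and `R₃ = F₂ · xyz`,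
`b a₂ = ε xyz` for some `ε`, and `xⱼ xₖ b = xyz` for the two other variables. In characteristic 2
and with `xᵢ² = 0` we have `b² = 0`, so `s = b + ε xⱼ xₖ` annihilates `a + b`. But `s ∉ m²`: the
algebra map `R → F₂ ⊕ F₂³` into the trivial square-zero extension sending `xᵢ ↦ eᵢ` kills `m²` and
sends `s` to `(0, c) ≠ 0`.
-/

open MvPolynomial TrivSqZeroExt

noncomputable abbrev var (i : Fin 3) : Rcir := Ideal.Quotient.mk relIdeal (X i)

lemma var_pow_eq_zero (i : Fin 3) {e : ℕ} (he : 2 ≤ e) : var i ^ e = 0 := by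
  rw [← Nat.add_sub_cancel' he, pow_add, ← map_pow, Ideal.Quotient.eq_zero_iff_mem.mpr, zero_mul]
  exact Ideal.subset_span (by fin_cases i <;> simp)

lemma var_monomial_eq_zero {a b c : ℕ} (h : 2 ≤ a ∨ 2 ≤ b ∨ 2 ≤ c) :
    var 0 ^ a * var 1 ^ b * var 2 ^ c = 0 := by
  rcases h with h | h | h <;> simp [var_pow_eq_zero _ h]

lemma two_eq_zero : (2 : Rcir) = 0 := by
  have := congrArg (algebraMap (ZMod 2) Rcir) (ZMod.natCast_self 2)
  rwa [map_natCast, map_zero] at this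

lemma var_mem_gradedPart_one (i : Fin 3) : var i ∈ gradedPart 1 :=
  ⟨X i, isHomogeneous_X _ i, rfl⟩

lemma mul_mem_gradedPart {i j : ℕ} {a b : Rcir} (ha : a ∈ gradedPart i) (hb : b ∈ gradedPart j) :
    a * b ∈ gradedPart (i + j) := by
  obtain ⟨p, hp, rfl⟩ := ha
  obtain ⟨q, hq, rfl⟩ := hb
  exact ⟨p * q, hp.mul hq, map_mul (Ideal.Quotient.mkₐ (ZMod 2) relIdeal) p q⟩

lemma mk_monomial (d : Fin 3 →₀ ℕ) :
    Ideal.Quotient.mk relIdeal (monomial d 1) = var 0 ^ d 0 * var 1 ^ d 1 * var 2 ^ d 2 := by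
  rw [monomial_eq, C_1, one_mul, Finsupp.prod_fintype _ _ (fun _ => pow_zero _), map_prod,
    Fin.prod_univ_three]
  simp only [map_pow]

lemma gradedPart_le_of_monomial_mem {n : ℕ} {S : Submodule (ZMod 2) Rcir}
    (h : ∀ d : Fin 3 →₀ ℕ, d 0 + d 1 + d 2 = n → var 0 ^ d 0 * var 1 ^ d 1 * var 2 ^ d 2 ∈ S) :
    gradedPart n ≤ S := by
  rintro _ ⟨p, hp, rfl⟩
  rw [p.as_sum, map_sum]
  refine Submodule.sum_mem _ fun d hd => ?_
  have hdeg : d 0 + d 1 + d 2 = n := by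
    rw [← hp (mem_support_iff.mp hd), Finsupp.weight_apply, Finsupp.sum_fintype _ _ (by simp),
      Fin.sum_univ_three]
    simp
  rw [← mul_one (coeff d p), ← smul_eq_mul, ← smul_monomial, map_smul]
  exact S.smul_mem _ ((mk_monomial d).symm ▸ h d hdeg)

lemma gradedPart_eq_bot {n : ℕ} (hn : 4 ≤ n) : gradedPart n = ⊥ :=
  eq_bot_iff.mpr <| gradedPart_le_of_monomial_mem fun _ hd => by
    rw [var_monomial_eq_zero (by omega)]
    exact zero_mem _

lemma mul_eq_zero_of_mem_gradedPart {m n : ℕ} {x y : Rcir} (hmn : 4 ≤ m + n)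
    (hx : x ∈ gradedPart m) (hy : y ∈ gradedPart n) : x * y = 0 :=
  (Submodule.mem_bot _).mp (gradedPart_eq_bot hmn ▸ mul_mem_gradedPart hx hy)

lemma gradedPart_three_le : gradedPart 3 ≤ Submodule.span (ZMod 2) {var 0 * var 1 * var 2} :=
  gradedPart_le_of_monomial_mem fun d hd => by
    by_cases h : 2 ≤ d 0 ∨ 2 ≤ d 1 ∨ 2 ≤ d 2
    · rw [var_monomial_eq_zero h]
      exact zero_mem _
    · obtain ⟨h0, h1, h2⟩ : d 0 = 1 ∧ d 1 = 1 ∧ d 2 = 1 := by omega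
      rw [h0, h1, h2]
      simp

lemma gradedPart_one_le : gradedPart 1 ≤ Submodule.span (ZMod 2) (Set.range var) :=
  gradedPart_le_of_monomial_mem fun d hd => by
    obtain ⟨i, hi⟩ : ∃ i, var 0 ^ d 0 * var 1 ^ d 1 * var 2 ^ d 2 = var i := by
      rcases (by omega : d 0 = 1 ∧ d 1 = 0 ∧ d 2 = 0 ∨ d 0 = 0 ∧ d 1 = 1 ∧ d 2 = 0 ∨
        d 0 = 0 ∧ d 1 = 0 ∧ d 2 = 1) with ⟨h0, h1, h2⟩ | ⟨h0, h1, h2⟩ | ⟨h0, h1, h2⟩ <;>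
        simp [h0, h1, h2]
    exact hi ▸ Submodule.subset_span (Set.mem_range_self i)

noncomputable def linearPart : Rcir →ₐ[ZMod 2] TrivSqZeroExt (ZMod 2) (Fin 3 → ZMod 2) :=
  Ideal.Quotient.liftₐ relIdeal (aeval fun i => inr (Pi.single i 1)) fun _ hp =>
    RingHom.mem_ker.mp <| (Ideal.span_le (I := RingHom.ker _)).mpr
      (by rintro _ (rfl | rfl | rfl) <;> simp [sq, inr_mul_inr]) hp

lemma linearPart_var (i : Fin 3) : linearPart (var i) = inr (Pi.single i 1) :=
  aeval_X _ i

lemma fst_linearPart_of_mem {s : Rcir} (hs : s ∈ mIdeal) : (linearPart s).fst = 0 := by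
  suffices mIdeal ≤ RingHom.ker ((fstHom (ZMod 2) (ZMod 2) (Fin 3 → ZMod 2)).comp linearPart)
    from this hs
  rw [mIdeal, Ideal.span_le]
  rintro _ (rfl | rfl | rfl) <;> simp [RingHom.mem_ker, linearPart_var _]

lemma linearPart_eq_zero_of_mem_sq {s : Rcir} (hs : s ∈ mIdeal ^ 2) : linearPart s = 0 := by
  rw [sq] at hs
  refine Submodule.mul_induction_on hs (fun t ht u hu => ?_) fun _ _ h h' => by simp [h, h']
  ext <;> simp [fst_linearPart_of_mem ht, fst_linearPart_of_mem hu]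

lemma eq_zero_of_mem_gradedPart_one_of_mem_sq {b : Rcir} (hb : b ∈ gradedPart 1)
    (hb2 : b ∈ mIdeal ^ 2) : b = 0 := by
  obtain ⟨c, rfl⟩ := (Submodule.mem_span_range_iff_exists_fun _).mp (gradedPart_one_le hb)
  have hc : inr c = linearPart (∑ i, c i • var i) := by
    simp [map_sum, linearPart_var, ← inr_sum, ← inr_smul, ← pi_eq_sum_univ']
  rw [linearPart_eq_zero_of_mem_sq hb2, ← inr_zero, inr_injective.eq_iff] at hc
  simp [hc]

lemma var_mul_var_mul_var (i l : Fin 3) :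
    var (i + 1) * var (i + 2) * var l = if l = i then var 0 * var 1 * var 2 else 0 := by
  have hsq : ∀ l, var l ^ 2 = 0 := fun l => var_pow_eq_zero l le_rfl
  fin_cases i <;> fin_cases l <;> simp <;> ring_nf <;> simp [hsq]

lemma exists_var_mul_var_mul_eq {b : Rcir} (hb : b ∈ gradedPart 1) (hb0 : b ≠ 0) :
    ∃ j k, var j * var k * b = var 0 * var 1 * var 2 := by
  obtain ⟨c, rfl⟩ := (Submodule.mem_span_range_iff_exists_fun _).mp (gradedPart_one_le hb)
  obtain ⟨i, hi⟩ : ∃ i, c i = 1 := by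
    by_contra! h
    refine hb0 (Finset.sum_eq_zero fun i _ => ?_)
    rw [(by decide : ∀ x : ZMod 2, x ≠ 1 → x = 0) _ (h i), zero_smul]
  refine ⟨i + 1, i + 2, ?_⟩
  simp [Finset.mul_sum, mul_smul_comm, var_mul_var_mul_var, hi]

lemma sq_eq_zero_of_mem_span_var {b : Rcir} (hb : b ∈ Submodule.span (ZMod 2) (Set.range var)) :
    b ^ 2 = 0 := by
  induction hb using Submodule.span_induction with
  | mem x hx =>
    obtain ⟨i, rfl⟩ := hx
    exact var_pow_eq_zero i le_rfl
  | zero => simp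
  | add x y _ _ hx hy => linear_combination hx + hy + x * y * two_eq_zero
  | smul c x _ hx => rw [smul_pow, hx, smul_zero]

lemma var_mem_mIdeal (i : Fin 3) : var i ∈ mIdeal :=
  Ideal.subset_span (by fin_cases i <;> simp)

/-- For every `a` in the degree-2 plus degree-3 graded part and every nonzero `b` of degree 1,
the annihilator of `a + b` is not contained in `m²`. -/
theorem stmt0 :
    ∀ a ∈ gradedPart 2 ⊔ gradedPart 3, ∀ b ∈ gradedPart 1, b ≠ 0 →
      ¬ ({s : Rcir | s * (a + b) = 0} ⊆ (↑(mIdeal ^ 2) : Set Rcir)) := by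
  intro a ha b hb hb0 hsub
  obtain ⟨a₂, ha₂, a₃, ha₃, rfl⟩ := Submodule.mem_sup.mp ha
  obtain ⟨ε, hε⟩ :=
    Submodule.mem_span_singleton.mp (gradedPart_three_le (mul_mem_gradedPart hb ha₂))
  obtain ⟨j, k, hjk⟩ := exists_var_mul_var_mul_eq hb hb0
  set q := var j * var k
  set e := algebraMap (ZMod 2) Rcir ε
  have hq : q ∈ gradedPart 2 :=
    mul_mem_gradedPart (var_mem_gradedPart_one j) (var_mem_gradedPart_one k)
  have hba₂ : b * a₂ = e * (var 0 * var 1 * var 2) := by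
    rw [← hε]
    exact Algebra.smul_def ε (var 0 * var 1 * var 2)
  have hba₃ := mul_eq_zero_of_mem_gradedPart (by norm_num) hb ha₃
  have hqa₂ := mul_eq_zero_of_mem_gradedPart (by norm_num) hq ha₂
  have hqa₃ := mul_eq_zero_of_mem_gradedPart (by norm_num) hq ha₃
  have hbb := sq_eq_zero_of_mem_span_var (gradedPart_one_le hb)
  have hann : (b + e * q) * (a₂ + a₃ + b) = 0 := by
    linear_combination hba₂ + hba₃ + hbb + e * (hqa₂ + hqa₃ + hjk)
      + e * (var 0 * var 1 * var 2) * two_eq_zero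
  have hq₂ : e * q ∈ mIdeal ^ 2 :=
    Ideal.mul_mem_left _ _ (sq mIdeal ▸ Ideal.mul_mem_mul (var_mem_mIdeal j) (var_mem_mIdeal k))
  have hb₂ : b ∈ mIdeal ^ 2 := by
    simpa using Ideal.sub_mem _ (hsub hann) hq₂
  exact hb0 (eq_zero_of_mem_gradedPart_one_of_mem_sq hb hb₂)
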